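/- Sum-rate converse inequality for the MA/DBC: for any (n, M13, M23, M31, M32) code for the additive-noise MA/DBC in which the noise vector Z3^n is independent of (W13, W23, W31, W32, Z1^n, Z2^n), one has H(W13, W23 | W31, W32) − H(W13, W23 | Y3^n, W31, W32) ≤ n log q − H(Z3^n). -/

import Mathlib

open MeasureTheory ProbabilityTheory Real Filter Topology
open scoped ENNReal

noncomputable section

/-- Shannon entropy (in the same base as `Real.log`) of a finitely-valued random variable. -/
def Hent {Ω S : Type*} [MeasurableSpace Ω] [Fintype S] (μ : Measure Ω) (X : Ω → S) : ℝ :=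
  ∑ s : S, Real.negMulLog ((μ (X ⁻¹' {s})).toReal)

/-- Mutual information I(X ; Y) = H(X) + H(Y) − H(X, Y). -/
def MI {Ω S T : Type*} [MeasurableSpace Ω] [Fintype S] [Fintype T]
    (μ : Measure Ω) (X : Ω → S) (Y : Ω → T) : ℝ :=
  Hent μ X + Hent μ Y - Hent μ (fun ω => (X ω, Y ω))

/-- Conditional mutual information
I(X ; Y | Z) = H(X, Z) + H(Y, Z) − H(X, Y, Z) − H(Z). -/
def CMI {Ω S T U : Type*} [MeasurableSpace Ω] [Fintype S] [Fintype T] [Fintype U]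
    (μ : Measure Ω) (X : Ω → S) (Y : Ω → T) (Z : Ω → U) : ℝ :=
  Hent μ (fun ω => (X ω, Z ω)) + Hent μ (fun ω => (Y ω, Z ω))
    - Hent μ (fun ω => (X ω, Y ω, Z ω)) - Hent μ Z

/-- Conditional Shannon entropy H(X | Y) = H(X, Y) − H(Y). -/
def Hcond {Ω S T : Type*} [MeasurableSpace Ω] [Fintype S] [Fintype T]
    (μ : Measure Ω) (X : Ω → S) (Y : Ω → T) : ℝ :=
  Hent μ (fun ω => (X ω, Y ω)) - Hent μ Y

/-- Elementary conditional independence of finitely-valued random variables X and Y given Z: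
for all values a, b, c,  P(X=a, Y=b, Z=c) · P(Z=c) = P(X=a, Z=c) · P(Y=b, Z=c). -/
def CondIndepElem {Ω S T U : Type*} [MeasurableSpace Ω] (μ : Measure Ω)
    (X : Ω → S) (Y : Ω → T) (Z : Ω → U) : Prop :=
  ∀ (a : S) (b : T) (c : U),
    μ (X ⁻¹' {a} ∩ Y ⁻¹' {b} ∩ Z ⁻¹' {c}) * μ (Z ⁻¹' {c}) =
      μ (X ⁻¹' {a} ∩ Z ⁻¹' {c}) * μ (Y ⁻¹' {b} ∩ Z ⁻¹' {c})

/-- An (n, M13, M23, M31, M32) code for the multiple access / degraded broadcast channel. -/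
structure MACode (q n M13 M23 M31 M32 : ℕ) where
  f1 : Fin M13 → (i : Fin n) → (Fin i.1 → ZMod q) → ZMod q
  f2 : Fin M23 → (i : Fin n) → (Fin i.1 → ZMod q) → ZMod q
  f3 : Fin M31 → Fin M32 → (i : Fin n) → (Fin i.1 → ZMod q) → ZMod q
  g1 : Fin M13 → (Fin n → ZMod q) → Fin M31
  g2 : Fin M23 → (Fin n → ZMod q) → Fin M32
  g3 : Fin M31 → Fin M32 → (Fin n → ZMod q) → Fin M13 × Fin M23

/-- The triple of channel inputs (X_{1,i}, X_{2,i}, X_{3,i}) produced by the adaptive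
encoders, where the past outputs are Y_{1,j} = X_{1,j} + X_{3,j} + Z_{1,j},
Y_{2,j} = X_{2,j} + X_{3,j} + Z_{1,j} + Z_{2,j} and
Y_{3,j} = X_{1,j} + X_{2,j} + X_{3,j} + Z_{3,j} (addition mod q). -/
def MAX {q n M13 M23 M31 M32 : ℕ} (C : MACode q n M13 M23 M31 M32)
    (w13 : Fin M13) (w23 : Fin M23) (w31 : Fin M31) (w32 : Fin M32)
    (z1 z2 z3 : Fin n → ZMod q) : (i : Fin n) → ZMod q × ZMod q × ZMod q
  | i =>
    (C.f1 w13 i (fun j =>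
        have h : j.1 < n := j.2.trans i.2
        (MAX C w13 w23 w31 w32 z1 z2 z3 ⟨j.1, h⟩).1 +
          (MAX C w13 w23 w31 w32 z1 z2 z3 ⟨j.1, h⟩).2.2 + z1 ⟨j.1, h⟩),
     C.f2 w23 i (fun j =>
        have h : j.1 < n := j.2.trans i.2
        (MAX C w13 w23 w31 w32 z1 z2 z3 ⟨j.1, h⟩).2.1 +
          (MAX C w13 w23 w31 w32 z1 z2 z3 ⟨j.1, h⟩).2.2 + z1 ⟨j.1, h⟩ + z2 ⟨j.1, h⟩),
     C.f3 w31 w32 i (fun j =>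
        have h : j.1 < n := j.2.trans i.2
        (MAX C w13 w23 w31 w32 z1 z2 z3 ⟨j.1, h⟩).1 +
          (MAX C w13 w23 w31 w32 z1 z2 z3 ⟨j.1, h⟩).2.1 +
          (MAX C w13 w23 w31 w32 z1 z2 z3 ⟨j.1, h⟩).2.2 + z3 ⟨j.1, h⟩))
  termination_by i => i.1
  decreasing_by all_goals exact j.2

/-- Output sequence Y_1^n at user 1. -/
def MAY1 {q n M13 M23 M31 M32 : ℕ} (C : MACode q n M13 M23 M31 M32)
    (w13 : Fin M13) (w23 : Fin M23) (w31 : Fin M31) (w32 : Fin M32)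
    (z1 z2 z3 : Fin n → ZMod q) (i : Fin n) : ZMod q :=
  (MAX C w13 w23 w31 w32 z1 z2 z3 i).1 + (MAX C w13 w23 w31 w32 z1 z2 z3 i).2.2 + z1 i

/-- Output sequence Y_2^n at user 2. -/
def MAY2 {q n M13 M23 M31 M32 : ℕ} (C : MACode q n M13 M23 M31 M32)
    (w13 : Fin M13) (w23 : Fin M23) (w31 : Fin M31) (w32 : Fin M32)
    (z1 z2 z3 : Fin n → ZMod q) (i : Fin n) : ZMod q :=
  (MAX C w13 w23 w31 w32 z1 z2 z3 i).2.1 + (MAX C w13 w23 w31 w32 z1 z2 z3 i).2.2 +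
    z1 i + z2 i

/-- Output sequence Y_3^n at user 3. -/
def MAY3 {q n M13 M23 M31 M32 : ℕ} (C : MACode q n M13 M23 M31 M32)
    (w13 : Fin M13) (w23 : Fin M23) (w31 : Fin M31) (w32 : Fin M32)
    (z1 z2 z3 : Fin n → ZMod q) (i : Fin n) : ZMod q :=
  (MAX C w13 w23 w31 w32 z1 z2 z3 i).1 + (MAX C w13 w23 w31 w32 z1 z2 z3 i).2.1 +
    (MAX C w13 w23 w31 w32 z1 z2 z3 i).2.2 + z3 i

/-!
Write `W = (W13, W23)`, `V = (W31, W32)` and `Y = Y3^n`. The left-hand side is `I(W; Y | V)`, which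
is at most `H(Y) - H(Y | W, V) ≤ n log q - H(Y | W, V, Z1^n, Z2^n)`. Once `W, V, Z1^n, Z2^n` are
fixed, `Y_{3,i}` is `Z_{3,i}` plus a function of `Z_3^{i-1}`, so `Y` and `Z3^n` determine each other
and `H(Y | W, V, Z1^n, Z2^n) = H(Z3^n | W, V, Z1^n, Z2^n) = H(Z3^n)` by independence. Every entropy
inequality used reduces to the nonnegativity of conditional mutual information, which is Gibbs'
inequality against the conditionally independent coupling.
-/

lemma sub_le_mul_log_sub_mul_log {x r : ℝ} (hx : 0 ≤ x) (hr : 0 < r) :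
    x - r ≤ x * log x - x * log r := by
  rcases hx.eq_or_lt with rfl | hx
  · simpa using hr.le
  have h := Real.one_sub_inv_le_log_of_pos (div_pos hx hr)
  rw [Real.log_div hx.ne' hr.ne', inv_div] at h
  have h' := mul_le_mul_of_nonneg_left h hx.le
  rw [mul_sub, mul_one, mul_div_cancel₀ _ hx.ne'] at h'
  linarith

theorem sum_mul_log_le_sum_mul_log {ι : Type*} [Fintype ι] {p r : ι → ℝ}
    (hp : ∀ i, 0 ≤ p i) (hr : ∀ i, 0 ≤ r i) (hpr : ∀ i, 0 < p i → 0 < r i)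
    (hsum : ∑ i, r i ≤ ∑ i, p i) :
    ∑ i, p i * log (r i) ≤ ∑ i, p i * log (p i) := by
  have hterm : ∀ i, p i - r i ≤ p i * log (p i) - p i * log (r i) := fun i ↦ by
    rcases (hp i).eq_or_lt with h | h
    · simpa [← h] using hr i
    · exact sub_le_mul_log_sub_mul_log (hp i) (hpr i h)
  have := Finset.sum_le_sum fun i (_ : i ∈ Finset.univ) ↦ hterm i
  rw [Finset.sum_sub_distrib, Finset.sum_sub_distrib] at this
  linarith

lemma mul_log_mul_of_ne_zero {a b c : ℝ} (hb : a ≠ 0 → b ≠ 0) (hc : a ≠ 0 → c ≠ 0) :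
    a * log (b * c) = a * log b + a * log c := by
  rcases eq_or_ne a 0 with rfl | ha
  · simp
  · rw [Real.log_mul (hb ha) (hc ha), mul_add]

section Fibers

variable {Ω S T : Type*} [MeasurableSpace Ω] {μ : Measure Ω}

lemma measureReal_preimage_singleton_le_comp [IsFiniteMeasure μ] (X : Ω → S) (g : S → T)
    (s : S) :
    μ.real (X ⁻¹' {s}) ≤ μ.real ((fun ω ↦ g (X ω)) ⁻¹' {g s}) :=
  measureReal_mono fun ω (h : X ω = s) ↦ show g (X ω) = g s by rw [h]

variable [Fintype S] [MeasurableSpace S] [MeasurableSingletonClass S]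

lemma measureReal_comp_preimage_singleton [IsFiniteMeasure μ] [DecidableEq T] {X : Ω → S}
    (hX : Measurable X) (g : S → T) (t : T) :
    μ.real ((fun ω ↦ g (X ω)) ⁻¹' {t}) = ∑ s with g s = t, μ.real (X ⁻¹' {s}) := by
  rw [sum_measureReal_preimage_singleton _ fun s _ ↦ hX (measurableSet_singleton s)]
  congr 1
  ext ω
  simp

variable [IsProbabilityMeasure μ]

lemma sum_measureReal_preimage_singleton_eq_one {X : Ω → S} (hX : Measurable X) :
    ∑ s, μ.real (X ⁻¹' {s}) = 1 := by
  rw [sum_measureReal_preimage_singleton _ fun s _ ↦ hX (measurableSet_singleton s),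
    Finset.coe_univ, Set.preimage_univ, probReal_univ]

end Fibers

section Entropy

variable {Ω S T U : Type*} [MeasurableSpace Ω] {μ : Measure Ω} [Fintype S] [Fintype T] [Fintype U]

lemma Hent_comp_of_injective {X : Ω → S} {g : S → T} (hg : Function.Injective g) :
    Hent μ (fun ω ↦ g (X ω)) = Hent μ X := by
  refine (Fintype.sum_of_injective g hg _ _ (fun t ht ↦ ?_) fun s ↦ ?_).symm
  · have hempty : (fun ω ↦ g (X ω)) ⁻¹' {t} = ∅ :=
      Set.eq_empty_of_forall_notMem fun ω hω ↦ ht ⟨X ω, hω⟩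
    simp [hempty]
  · have hfiber : (fun ω ↦ g (X ω)) ⁻¹' {g s} = X ⁻¹' {s} := by
      ext ω
      simp [hg.eq_iff]
    rw [hfiber]

lemma Hcond_comp_of_injective {Z : Ω → S} {G : Ω → T} (f : T → S → U)
    (hf : ∀ g, Function.Injective (f g)) :
    Hcond μ (fun ω ↦ f (G ω) (Z ω)) G = Hcond μ Z G :=
  congrArg (· - Hent μ G) <| Hent_comp_of_injective (X := fun ω ↦ (Z ω, G ω))
    (g := fun p ↦ (f p.2 p.1, p.2)) fun p p' h ↦ by
      obtain ⟨h₁, h₂ : p.2 = p'.2⟩ := Prod.mk.inj h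
      rw [h₂] at h₁
      exact Prod.ext (hf _ h₁) h₂

variable [MeasurableSpace S] [MeasurableSingletonClass S]

lemma Hent_comp_eq_neg_sum [IsFiniteMeasure μ] {X : Ω → S} (hX : Measurable X) (g : S → T) :
    Hent μ (fun ω ↦ g (X ω)) =
      -∑ s, μ.real (X ⁻¹' {s}) * log (μ.real ((fun ω ↦ g (X ω)) ⁻¹' {g s})) := by
  classical
  set pg : T → ℝ := fun t ↦ μ.real ((fun ω ↦ g (X ω)) ⁻¹' {t})
  calc Hent μ (fun ω ↦ g (X ω)) = ∑ t, negMulLog (pg t) := rfl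
    _ = ∑ t, ∑ s with g s = t, -(μ.real (X ⁻¹' {s}) * log (pg t)) := by
      refine Finset.sum_congr rfl fun t _ ↦ ?_
      have hpg : pg t = ∑ s with g s = t, μ.real (X ⁻¹' {s}) :=
        measureReal_comp_preimage_singleton hX g t
      rw [Real.negMulLog, neg_mul]
      nth_rw 1 [hpg]
      rw [Finset.sum_mul, Finset.sum_neg_distrib]
    _ = ∑ t, ∑ s with g s = t, -(μ.real (X ⁻¹' {s}) * log (pg (g s))) := by
      refine Finset.sum_congr rfl fun t _ ↦ Finset.sum_congr rfl fun s hs ↦ ?_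
      rw [(Finset.mem_filter.mp hs).2]
    _ = _ := by
      rw [Finset.sum_fiberwise Finset.univ g fun s ↦ -(μ.real (X ⁻¹' {s}) * log (pg (g s))),
        Finset.sum_neg_distrib]

lemma Hent_eq_neg_sum [IsFiniteMeasure μ] {X : Ω → S} (hX : Measurable X) :
    Hent μ X = -∑ s, μ.real (X ⁻¹' {s}) * log (μ.real (X ⁻¹' {s})) :=
  Hent_comp_eq_neg_sum (g := id) hX

variable [IsProbabilityMeasure μ]

lemma Hent_le_log_card {X : Ω → S} (hX : Measurable X) : Hent μ X ≤ log (Fintype.card S) := by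
  have hgibbs := sum_mul_log_le_sum_mul_log (p := fun s ↦ μ.real (X ⁻¹' {s}))
    (r := fun _ ↦ (Fintype.card S : ℝ)⁻¹) (fun _ ↦ measureReal_nonneg) (fun _ ↦ by positivity)
    (fun s _ ↦ inv_pos.mpr (Nat.cast_pos.mpr (Fintype.card_pos_iff.mpr ⟨s⟩)))
    (by
      rw [sum_measureReal_preimage_singleton_eq_one hX, Finset.sum_const, Finset.card_univ,
        nsmul_eq_mul]
      exact mul_inv_le_one)
  rw [← Finset.sum_mul, sum_measureReal_preimage_singleton_eq_one hX, one_mul,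
    Real.log_inv] at hgibbs
  rw [Hent_eq_neg_sum hX]
  linarith

variable [MeasurableSpace T] [MeasurableSingletonClass T]

lemma Hent_pair_of_indepFun {X : Ω → S} {Y : Ω → T} (hX : Measurable X) (hY : Measurable Y)
    (hXY : IndepFun X Y μ) : Hent μ (fun ω ↦ (X ω, Y ω)) = Hent μ X + Hent μ Y := by
  have hpair : Measurable fun ω ↦ (X ω, Y ω) := hX.prodMk hY
  have hfac : ∀ i : S × T, μ.real ((fun ω ↦ (X ω, Y ω)) ⁻¹' {i}) =
      μ.real (X ⁻¹' {i.1}) * μ.real (Y ⁻¹' {i.2}) := fun i ↦ by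
    rw [← Set.singleton_prod_singleton, Set.mk_preimage_prod, measureReal_def,
      hXY.measure_inter_preimage_eq_mul _ _ (measurableSet_singleton _)
        (measurableSet_singleton _), ENNReal.toReal_mul]
    rfl
  rw [Hent_eq_neg_sum hpair, show Hent μ X = Hent μ (fun ω ↦ (X ω, Y ω).1) from rfl,
    show Hent μ Y = Hent μ (fun ω ↦ (X ω, Y ω).2) from rfl, Hent_comp_eq_neg_sum hpair,
    Hent_comp_eq_neg_sum hpair, ← neg_add, ← Finset.sum_add_distrib]
  refine congrArg _ (Finset.sum_congr rfl fun i _ ↦ ?_)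
  nth_rw 2 [hfac]
  exact mul_log_mul_of_ne_zero (fun h ↦ left_ne_zero_of_mul (hfac i ▸ h))
    (fun h ↦ right_ne_zero_of_mul (hfac i ▸ h))

lemma Hcond_eq_Hent_of_indepFun {Z : Ω → S} {G : Ω → T} (hZ : Measurable Z) (hG : Measurable G)
    (hGZ : IndepFun G Z μ) : Hcond μ Z G = Hent μ Z := by
  rw [Hcond, Hent_pair_of_indepFun hZ hG hGZ.symm, add_sub_cancel_right]

variable [MeasurableSpace U] [MeasurableSingletonClass U]

lemma sum_measureReal_prodMk_preimage_singleton {X : Ω → S} {Z : Ω → T} (hX : Measurable X)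
    (hZ : Measurable Z) (c : T) :
    ∑ a, μ.real ((fun ω ↦ (X ω, Z ω)) ⁻¹' {(a, c)}) = μ.real (Z ⁻¹' {c}) := by
  classical
  rw [show Z = fun ω ↦ (X ω, Z ω).2 from rfl,
    measureReal_comp_preimage_singleton (hX.prodMk hZ), Finset.sum_filter,
    Fintype.sum_prod_type]
  simp only [Finset.sum_ite_eq', Finset.mem_univ, if_true]

-- `P(X = a, Z = c) P(Y = b, Z = c) / P(Z = c)` is the law of the coupling of `X` and `Y` that is
-- conditionally independent given `Z`.
lemma sum_condIndepCoupling_eq_one {X : Ω → S} {Y : Ω → T} {Z : Ω → U} (hX : Measurable X)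
    (hY : Measurable Y) (hZ : Measurable Z) :
    ∑ i : S × T × U, μ.real ((fun ω ↦ (X ω, Z ω)) ⁻¹' {(i.1, i.2.2)}) *
      μ.real ((fun ω ↦ (Y ω, Z ω)) ⁻¹' {(i.2.1, i.2.2)}) / μ.real (Z ⁻¹' {i.2.2}) = 1 := by
  simp only [Fintype.sum_prod_type]
  rw [Finset.sum_congr rfl fun a _ ↦ Finset.sum_comm, Finset.sum_comm]
  simp_rw [← Finset.sum_div]
  simp_rw [← Finset.sum_mul_sum, sum_measureReal_prodMk_preimage_singleton hX hZ,
    sum_measureReal_prodMk_preimage_singleton hY hZ, mul_self_div_self]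
  exact sum_measureReal_preimage_singleton_eq_one hZ

theorem CMI_nonneg {X : Ω → S} {Y : Ω → T} {Z : Ω → U} (hX : Measurable X) (hY : Measurable Y)
    (hZ : Measurable Z) : 0 ≤ CMI μ X Y Z := by
  have hXYZ : Measurable fun ω ↦ (X ω, Y ω, Z ω) := hX.prodMk (hY.prodMk hZ)
  set p : S × T × U → ℝ := fun i ↦ μ.real ((fun ω ↦ (X ω, Y ω, Z ω)) ⁻¹' {i})
  set pxz : S × T × U → ℝ := fun i ↦ μ.real ((fun ω ↦ (X ω, Z ω)) ⁻¹' {(i.1, i.2.2)})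
  set pyz : S × T × U → ℝ := fun i ↦ μ.real ((fun ω ↦ (Y ω, Z ω)) ⁻¹' {(i.2.1, i.2.2)})
  set pz : S × T × U → ℝ := fun i ↦ μ.real (Z ⁻¹' {i.2.2})
  have hXZ : Hent μ (fun ω ↦ (X ω, Z ω)) = -∑ i, p i * log (pxz i) :=
    Hent_comp_eq_neg_sum hXYZ fun i ↦ (i.1, i.2.2)
  have hYZ : Hent μ (fun ω ↦ (Y ω, Z ω)) = -∑ i, p i * log (pyz i) :=
    Hent_comp_eq_neg_sum hXYZ fun i ↦ (i.2.1, i.2.2)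
  have hZ' : Hent μ Z = -∑ i, p i * log (pz i) := Hent_comp_eq_neg_sum hXYZ fun i ↦ i.2.2
  have hpos : ∀ {q : S × T × U → ℝ}, (∀ i, p i ≤ q i) → ∀ i, p i ≠ 0 → q i ≠ 0 :=
    fun hq i hi ↦ (lt_of_lt_of_le (measureReal_nonneg.lt_of_ne' hi) (hq i)).ne'
  have hpxz : ∀ i, p i ≤ pxz i :=
    measureReal_preimage_singleton_le_comp _ fun i : S × T × U ↦ (i.1, i.2.2)
  have hpyz : ∀ i, p i ≤ pyz i :=
    measureReal_preimage_singleton_le_comp _ fun i : S × T × U ↦ (i.2.1, i.2.2)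
  have hpz : ∀ i, p i ≤ pz i := measureReal_preimage_singleton_le_comp _ fun i : S × T × U ↦ i.2.2
  have hlog : ∀ i, p i * log (pxz i * pyz i / pz i) =
      p i * log (pxz i) + p i * log (pyz i) - p i * log (pz i) := fun i ↦ by
    rw [div_eq_mul_inv,
      mul_log_mul_of_ne_zero (fun h ↦ mul_ne_zero (hpos hpxz i h) (hpos hpyz i h))
        (fun h ↦ inv_ne_zero (hpos hpz i h)),
      mul_log_mul_of_ne_zero (hpos hpxz i) (hpos hpyz i), Real.log_inv, mul_neg, ← sub_eq_add_neg]
  have hgibbs := sum_mul_log_le_sum_mul_log (p := p) (r := fun i ↦ pxz i * pyz i / pz i)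
    (fun _ ↦ measureReal_nonneg) (fun _ ↦ by positivity)
    (fun i hi ↦ div_pos (mul_pos (hi.trans_le (hpxz i)) (hi.trans_le (hpyz i)))
      (hi.trans_le (hpz i)))
    (by rw [sum_condIndepCoupling_eq_one hX hY hZ, sum_measureReal_preimage_singleton_eq_one hXYZ])
  simp only [hlog, Finset.sum_sub_distrib, Finset.sum_add_distrib] at hgibbs
  rw [CMI, hXZ, hYZ, hZ', Hent_eq_neg_sum hXYZ]
  linarith

lemma Hcond_pair_le {X : Ω → S} {Y : Ω → T} {Z : Ω → U} (hX : Measurable X) (hY : Measurable Y)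
    (hZ : Measurable Z) : Hcond μ X (fun ω ↦ (Y ω, Z ω)) ≤ Hcond μ X Z := by
  have := CMI_nonneg (μ := μ) hX hY hZ
  rw [CMI] at this
  rw [Hcond, Hcond]
  linarith

lemma Hcond_le_Hent {X : Ω → S} {Y : Ω → T} (hX : Measurable X) (hY : Measurable Y) :
    Hcond μ X Y ≤ Hent μ X := by
  have h := Hcond_pair_le (μ := μ) hX hY (measurable_const (a := ()))
  have hXY : Hent μ (fun ω ↦ (X ω, Y ω, ())) = Hent μ (fun ω ↦ (X ω, Y ω)) :=
    Hent_comp_of_injective (X := fun ω ↦ (X ω, Y ω)) (g := fun p : S × T ↦ (p.1, p.2, ()))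
      (Function.LeftInverse.injective (g := fun q : S × T × Unit ↦ (q.1, q.2.1)) fun _ ↦ rfl)
  have hX' : Hent μ (fun ω ↦ (X ω, ())) = Hent μ X :=
    Hent_comp_of_injective (g := fun s : S ↦ (s, ())) (Prod.mk_left_injective ())
  have hY' : Hent μ (fun ω ↦ (Y ω, ())) = Hent μ Y :=
    Hent_comp_of_injective (g := fun t : T ↦ (t, ())) (Prod.mk_left_injective ())
  have hconst : Hent μ (fun _ : Ω ↦ ()) = 0 := by simp [Hent]
  rw [Hcond, Hcond, hXY, hX', hY', hconst] at h
  rw [Hcond]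
  linarith

end Entropy

lemma Hcond_sub_Hcond_pair_le {Ω R S T : Type*} [MeasurableSpace Ω] {μ : Measure Ω}
    [IsProbabilityMeasure μ] [Fintype R] [Fintype S] [MeasurableSpace S]
    [MeasurableSingletonClass S] [Fintype T] [MeasurableSpace T] [MeasurableSingletonClass T]
    {W : Ω → R} {V : Ω → S} {Y : Ω → T} (hV : Measurable V) (hY : Measurable Y) :
    Hcond μ W V - Hcond μ W (fun ω ↦ (Y ω, V ω)) ≤ Hent μ Y - Hcond μ Y (fun ω ↦ (W ω, V ω)) := by
  have hYV := Hcond_le_Hent (μ := μ) hY hV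
  have hswap : Hent μ (fun ω ↦ (W ω, Y ω, V ω)) = Hent μ (fun ω ↦ (Y ω, W ω, V ω)) :=
    Hent_comp_of_injective (X := fun ω ↦ (Y ω, W ω, V ω)) (g := fun p ↦ (p.2.1, p.1, p.2.2))
      (Function.LeftInverse.injective (g := fun p : R × T × S ↦ (p.2.1, p.1, p.2.2)) fun _ ↦ rfl)
  unfold Hcond at hYV ⊢
  rw [hswap]
  linarith

theorem injective_add_of_causal {n : ℕ} {G : Type*} [Add G] [IsLeftCancelAdd G]
    (φ : Fin n → (Fin n → G) → G) (hφ : ∀ i z z', (∀ j < i, z j = z' j) → φ i z = φ i z') :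
    Function.Injective fun z i ↦ φ i z + z i := by
  intro z z' h
  funext i
  induction i using WellFoundedLT.induction with
  | _ i ih =>
    have hi : φ i z + z i = φ i z' + z' i := congrFun h i
    rw [hφ i z z' ih] at hi
    exact add_left_cancel hi

section Channel

variable {q n M13 M23 M31 M32 : ℕ} (C : MACode q n M13 M23 M31 M32)
  (w13 : Fin M13) (w23 : Fin M23) (w31 : Fin M31) (w32 : Fin M32) (z1 z2 : Fin n → ZMod q)

lemma MAX_eq_of_forall_lt {z3 z3' : Fin n → ZMod q} (i : Fin n)
    (h : ∀ j < i, z3 j = z3' j) :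
    MAX C w13 w23 w31 w32 z1 z2 z3 i = MAX C w13 w23 w31 w32 z1 z2 z3' i := by
  induction i using WellFoundedLT.induction with
  | _ i ih =>
    have hpast : ∀ (j : Fin i.1) (hj : j.1 < n),
        MAX C w13 w23 w31 w32 z1 z2 z3 ⟨j, hj⟩ = MAX C w13 w23 w31 w32 z1 z2 z3' ⟨j, hj⟩ :=
      fun j _ ↦ ih _ j.2 fun k hk ↦ h k (hk.trans j.2)
    have hz3 : ∀ (j : Fin i.1) (hj : j.1 < n), z3 ⟨j, hj⟩ = z3' ⟨j, hj⟩ := fun j _ ↦ h _ j.2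
    rw [MAX, MAX]
    simp only [hpast, hz3]

lemma MAY3_injective : Function.Injective (MAY3 C w13 w23 w31 w32 z1 z2) :=
  injective_add_of_causal _ fun i _ _ h ↦ by rw [MAX_eq_of_forall_lt C w13 w23 w31 w32 z1 z2 i h]

end Channel

theorem madbc_sum_rate_converse_general {Ω : Type*} [MeasurableSpace Ω] (μ : Measure Ω)
    [IsProbabilityMeasure μ] (q : ℕ) [NeZero q]
    (n M13 M23 M31 M32 : ℕ) (C : MACode q n M13 M23 M31 M32)
    (W13 : Ω → Fin M13) (W23 : Ω → Fin M23) (W31 : Ω → Fin M31) (W32 : Ω → Fin M32)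
    (Z1 Z2 Z3 : Ω → Fin n → ZMod q)
    (hW13 : Measurable W13) (hW23 : Measurable W23)
    (hW31 : Measurable W31) (hW32 : Measurable W32)
    (hZ1 : Measurable Z1) (hZ2 : Measurable Z2) (hZ3 : Measurable Z3)
    (hindep : IndepFun
      (fun ω => (W13 ω, W23 ω, W31 ω, W32 ω, Z1 ω, Z2 ω)) Z3 μ) :
    Hcond μ (fun ω => (W13 ω, W23 ω)) (fun ω => (W31 ω, W32 ω)) -
      Hcond μ (fun ω => (W13 ω, W23 ω))
        (fun ω => (MAY3 C (W13 ω) (W23 ω) (W31 ω) (W32 ω) (Z1 ω) (Z2 ω) (Z3 ω),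
          W31 ω, W32 ω)) ≤
      n * Real.log q - Hent μ Z3 := by
  have hW : Measurable fun ω ↦ (W13 ω, W23 ω) := hW13.prodMk hW23
  have hV : Measurable fun ω ↦ (W31 ω, W32 ω) := hW31.prodMk hW32
  have hZ12 : Measurable fun ω ↦ (Z1 ω, Z2 ω) := hZ1.prodMk hZ2
  set G := fun ω ↦ ((Z1 ω, Z2 ω), (W13 ω, W23 ω), (W31 ω, W32 ω))
  have hG : Measurable G := hZ12.prodMk (hW.prodMk hV)
  let channel : ((Fin n → ZMod q) × (Fin n → ZMod q)) × (Fin M13 × Fin M23) × (Fin M31 × Fin M32) →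
      (Fin n → ZMod q) → Fin n → ZMod q :=
    fun g ↦ MAY3 C g.2.1.1 g.2.1.2 g.2.2.1 g.2.2.2 g.1.1 g.1.2
  set Y := fun ω ↦ MAY3 C (W13 ω) (W23 ω) (W31 ω) (W32 ω) (Z1 ω) (Z2 ω) (Z3 ω)
  have hY : Measurable Y :=
    (measurable_of_finite (Function.uncurry channel)).comp (hG.prodMk hZ3)
  have hGZ3 : IndepFun G Z3 μ :=
    hindep.comp (ψ := id)
      (φ := fun p ↦ ((p.2.2.2.2.1, p.2.2.2.2.2), (p.1, p.2.1), (p.2.2.1, p.2.2.2.1)))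
      (measurable_of_finite _) measurable_id
  have hnoise : Hcond μ Y G = Hent μ Z3 :=
    (Hcond_comp_of_injective (Z := Z3) (G := G) channel fun _ ↦ MAY3_injective C _ _ _ _ _ _).trans
      (Hcond_eq_Hent_of_indepFun hZ3 hG hGZ3)
  have hcard : Hent μ Y ≤ n * log q := by
    simpa [Fintype.card_fun, ZMod.card] using Hent_le_log_card (μ := μ) hY
  calc _ ≤ Hent μ Y - Hcond μ Y (fun ω ↦ ((W13 ω, W23 ω), (W31 ω, W32 ω))) :=
        Hcond_sub_Hcond_pair_le hV hY
    _ ≤ n * log q - Hent μ Z3 := by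
      refine sub_le_sub hcard ?_
      rw [← hnoise]
      exact Hcond_pair_le hY hZ12 (hW.prodMk hV)

/-- **Sum-rate converse inequality for the MA/DBC**: for any (n, M13, M23, M31, M32) code
for the additive-noise MA/DBC in which the noise vector Z3^n is independent of
(W13, W23, W31, W32, Z1^n, Z2^n), one has
H(W13, W23 | W31, W32) − H(W13, W23 | Y3^n, W31, W32) ≤ n log q − H(Z3^n). -/
theorem madbc_sum_rate_converse {Ω : Type*} [MeasurableSpace Ω] (μ : Measure Ω)
    [IsProbabilityMeasure μ] (q : ℕ) [NeZero q] (hq : 2 ≤ q)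
    (n M13 M23 M31 M32 : ℕ) (C : MACode q n M13 M23 M31 M32)
    (W13 : Ω → Fin M13) (W23 : Ω → Fin M23) (W31 : Ω → Fin M31) (W32 : Ω → Fin M32)
    (Z1 Z2 Z3 : Ω → Fin n → ZMod q)
    (hW13 : Measurable W13) (hW23 : Measurable W23)
    (hW31 : Measurable W31) (hW32 : Measurable W32)
    (hZ1 : Measurable Z1) (hZ2 : Measurable Z2) (hZ3 : Measurable Z3)
    (hindep : IndepFun
      (fun ω => (W13 ω, W23 ω, W31 ω, W32 ω, Z1 ω, Z2 ω)) Z3 μ) :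
    Hcond μ (fun ω => (W13 ω, W23 ω)) (fun ω => (W31 ω, W32 ω)) -
      Hcond μ (fun ω => (W13 ω, W23 ω))
        (fun ω => (MAY3 C (W13 ω) (W23 ω) (W31 ω) (W32 ω) (Z1 ω) (Z2 ω) (Z3 ω),
          W31 ω, W32 ω)) ≤
      n * Real.log q - Hent μ Z3 :=
  madbc_sum_rate_converse_general μ q n M13 M23 M31 M32 C W13 W23 W31 W32 Z1 Z2 Z3 hW13 hW23 hW31
    hW32 hZ1 hZ2 hZ3 hindep
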